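/- (Dual of Proposition 3) Let N = max_i end^{v_i} over all ℋ-nodes v₁,…,v_h of the syntax tree of Φ. For any signal x : ℕ → 𝒳, any k > N, any node v of the syntax tree and any t ∈ [int^v, end^v]: the induced satisfaction-vector entry of v computed from the basic set I(x_{0:k-1}) satisfies ι^v_{I(x_{0:k-1})}[t] = 0 if and only if (x, t) ⊭ Φ^v. -/
import Mathlib


namespace STLMon

/-- Three-valued satisfaction status: violated `0`, satisfied `1`, uncertain `?`. -/
inductive SatVal : Type
  | zero : SatVal
  | one : SatVal
  | unk : SatVal
deriving DecidableEq

/-- Direction to a child in the syntax tree (`left` is also used for only-children). -/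
inductive Dir : Type
  | left : Dir
  | right : Dir
deriving DecidableEq

/-- STL fragment (3): `Φ ::= G_{[a,b]} Φ | Φ₁ U'_{[a,b]} Φ₂ | Φ₁ ∧ Φ₂ | x ∈ ℋ`. -/
inductive Frag (X : Type) : Type
  | reg : Set X → Frag X
  | conj : Frag X → Frag X → Frag X
  | glob : ℕ → ℕ → Frag X → Frag X
  | untl : ℕ → ℕ → Frag X → Frag X → Frag X

namespace Frag

variable {X : Type}

/-- Semantics of the fragment: `fsat Φ x k` means `(x,k) ⊨ Φ`. -/
def fsat : Frag X → (ℕ → X) → ℕ → Prop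
  | reg H, x, k => x k ∈ H
  | conj φ ψ, x, k => fsat φ x k ∧ fsat ψ x k
  | glob a b φ, x, k => ∀ k', k + a ≤ k' → k' ≤ k + b → fsat φ x k'
  | untl a b φ ψ, x, k =>
      ∃ k', k + a ≤ k' ∧ k' ≤ k + b ∧ fsat ψ x k' ∧
        ∀ k'', k + a ≤ k'' → k'' ≤ k' → fsat φ x k''

/-- A node of the syntax tree of `Φ` is a path (list of directions) from the root;
`subAt Φ p` is the subformula `Φ^v` rooted at the node `v` with path `p`, if it exists. -/
def subAt : Frag X → List Dir → Option (Frag X)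
  | φ, [] => some φ
  | conj φ _, Dir.left :: p => subAt φ p
  | conj _ ψ, Dir.right :: p => subAt ψ p
  | glob _ _ φ, Dir.left :: p => subAt φ p
  | untl _ _ φ _, Dir.left :: p => subAt φ p
  | untl _ _ _ ψ, Dir.right :: p => subAt ψ p
  | _, _ => none

/-- Left endpoint `int^v` of the evaluation horizon of node `v`:
the sum of `a^{v'}` over all (strict) ancestors `v'` of `v`. -/
def intOf : Frag X → List Dir → ℕ
  | _, [] => 0
  | conj φ _, Dir.left :: p => intOf φ p
  | conj _ ψ, Dir.right :: p => intOf ψ p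
  | glob a _ φ, Dir.left :: p => a + intOf φ p
  | untl a _ φ _, Dir.left :: p => a + intOf φ p
  | untl a _ _ ψ, Dir.right :: p => a + intOf ψ p
  | _, _ => 0

/-- Right endpoint `end^v` of the evaluation horizon of node `v`:
the sum of `b^{v'}` over all (strict) ancestors `v'` of `v`. -/
def endOf : Frag X → List Dir → ℕ
  | _, [] => 0
  | conj φ _, Dir.left :: p => endOf φ p
  | conj _ ψ, Dir.right :: p => endOf ψ p
  | glob _ b φ, Dir.left :: p => b + endOf φ p
  | untl _ b φ _, Dir.left :: p => b + endOf φ p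
  | untl _ b _ ψ, Dir.right :: p => b + endOf ψ p
  | _, _ => 0

/-- `p` is an `ℋ`-node (a predicate leaf) of the syntax tree of `Φ`. -/
def IsHNode (Φ : Frag X) (p : List Dir) : Prop :=
  ∃ H : Set X, subAt Φ p = some (reg H)

/-- The satisfaction region `ℋ^v` attached to the `ℋ`-node at path `p`. -/
def regionAt (Φ : Frag X) (p : List Dir) : Set X :=
  match subAt Φ p with
  | some (reg H) => H
  | _ => ∅

/-- `(p, t)` is a meaningful entry of a basic set: `p` is an `ℋ`-node and
`t` lies in its evaluation horizon `[int^p, end^p]`. -/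
def Relevant (Φ : Frag X) (p : List Dir) (t : ℕ) : Prop :=
  IsHNode Φ p ∧ intOf Φ p ≤ t ∧ t ≤ endOf Φ p

/-- A basic set of satisfaction vectors: one three-valued entry for each `ℋ`-node
and each instant of its evaluation horizon. -/
def BasicSet (Φ : Frag X) : Type := ∀ p t, Relevant Φ p t → SatVal

/-- The entry of a basic set, totalized by `?` outside the relevant positions. -/
noncomputable def val (Φ : Frag X) (I : BasicSet Φ) (p : List Dir) (t : ℕ) : SatVal :=
  @dite _ (Relevant Φ p t) (Classical.dec _) (fun h => I p t h) (fun _ => SatVal.unk)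

open Classical in
/-- Induced satisfaction vectors (Definition 5): `ind β φ p t` is the induced value
`ι^v[t]` of the node `v` at path `p` carrying subformula `φ`, computed bottom-up from
the values `β` of the `ℋ`-node leaves. -/
noncomputable def ind (β : List Dir → ℕ → SatVal) : Frag X → List Dir → ℕ → SatVal
  | reg _, p, t => β p t
  | conj φ ψ, p, t =>
      if ind β φ (p ++ [Dir.left]) t = SatVal.zero ∨
         ind β ψ (p ++ [Dir.right]) t = SatVal.zero then SatVal.zero
      else if ind β φ (p ++ [Dir.left]) t = SatVal.one ∧
              ind β ψ (p ++ [Dir.right]) t = SatVal.one then SatVal.one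
      else SatVal.unk
  | glob a b φ, p, t =>
      if ∃ t', a ≤ t' ∧ t' ≤ b ∧ ind β φ (p ++ [Dir.left]) (t + t') = SatVal.zero then
        SatVal.zero
      else if ∀ t', a ≤ t' → t' ≤ b → ind β φ (p ++ [Dir.left]) (t + t') = SatVal.one then
        SatVal.one
      else SatVal.unk
  | untl a b φ ψ, p, t =>
      if (∀ t', a ≤ t' → t' ≤ b → ind β ψ (p ++ [Dir.right]) (t + t') = SatVal.zero) ∨
         (∀ t', a ≤ t' → t' ≤ b → ind β ψ (p ++ [Dir.right]) (t + t') = SatVal.one →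
            ∃ t'', a ≤ t'' ∧ t'' ≤ t' ∧ ind β φ (p ++ [Dir.left]) (t + t'') = SatVal.zero) then
        SatVal.zero
      else if ∃ t', a ≤ t' ∧ t' ≤ b ∧ ind β ψ (p ++ [Dir.right]) (t + t') = SatVal.one ∧
              ∀ t'', a ≤ t'' → t'' ≤ t' → ind β φ (p ++ [Dir.left]) (t + t'') = SatVal.one then
        SatVal.one
      else SatVal.unk

open Classical in
/-- Online update of a basic set upon observing state `xk` at instant `k`:
in each `ℋ`-node vector whose horizon contains `k`, only the entry at position `k`
is changed, to `1` if `xk ∈ ℋ^{v_i}` and to `0` otherwise. -/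
noncomputable def updateB (Φ : Frag X) (I : BasicSet Φ) (k : ℕ) (xk : X) : BasicSet Φ :=
  fun p t h =>
    if t = k then (if xk ∈ regionAt Φ p then SatVal.one else SatVal.zero) else I p t h

/-- The initial basic set `I₀`: every entry is `?`. -/
def initB (Φ : Frag X) : BasicSet Φ := fun _ _ _ => SatVal.unk

/-- `basicOf Φ x k` is `I(x_{0:k-1})`, obtained from `I₀` by successive updates
with `x 0, …, x (k-1)`. -/
noncomputable def basicOf (Φ : Frag X) (x : ℕ → X) : ℕ → BasicSet Φ
  | 0 => initB Φ
  | k + 1 => updateB Φ (basicOf Φ x k) k (x k)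

/-- Membership in `𝓘_k`: entries are `?` exactly at positions `t ≥ k`. -/
def InFam (Φ : Frag X) (I : BasicSet Φ) (k : ℕ) : Prop :=
  ∀ p t (h : Relevant Φ p t), (I p t h = SatVal.unk ↔ k ≤ t)

/-- The induced root satisfaction value `ι^root_I[0]` of a basic set `I`. -/
noncomputable def rootVal (Φ : Frag X) (I : BasicSet Φ) : SatVal :=
  ind (val Φ I) Φ [] 0

/-- `Is ∈ succ(I, k)`: `I ∈ 𝕀_k`, `Is ∈ 𝕀_{k+1}`, and `Is` agrees with `I`
on every `ℋ`-node entry at positions `t ∈ [int^v, min(k-1, end^v)]`. -/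
def Succ (Φ : Frag X) (k : ℕ) (I Is : BasicSet Φ) : Prop :=
  InFam Φ I k ∧ rootVal Φ I ≠ SatVal.zero ∧
  InFam Φ Is (k + 1) ∧ rootVal Φ Is ≠ SatVal.zero ∧
  ∀ p t (h : Relevant Φ p t), t < k → I p t h = Is p t h

/-- The consistent region `H_k(I, I_s) = ⋂ᵢ H_{i,k}`, where `H_{i,k}` is `ℋ^{v_i}` if
`ι_s^{v_i}[k] = 1`, the complement of `ℋ^{v_i}` if `ι_s^{v_i}[k] = 0`, and `𝒳` if `k`
is outside the horizon of `v_i`. -/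
def consReg (Φ : Frag X) (Is : BasicSet Φ) (k : ℕ) : Set X :=
  {x | ∀ p (h : Relevant Φ p k),
        (Is p k h = SatVal.zero → x ∉ regionAt Φ p) ∧
        (Is p k h = SatVal.one → x ∈ regionAt Φ p)}

end Frag

/-- Trajectory of the control system `x_{k+1} = f(x_k, u_k)`:
`traj f x u n` is the state after `n` steps from `x` under inputs `u`. -/
def traj {X U : Type} (f : X → U → X) (x : X) (u : ℕ → U) : ℕ → X
  | 0 => x
  | n + 1 => f (traj f x u n) (u n)

/-- The signal obtained from the prefix `xpre` on positions `0, …, k-1` followed by the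
state `xk` at position `k` and the trajectory `ξ_f(xk, u)` afterwards. -/
def runFrom {X U : Type} (f : X → U → X) (k : ℕ) (xpre : ℕ → X) (xk : X) (u : ℕ → U) :
    ℕ → X :=
  fun n => if n < k then xpre n else traj f xk u (n - k)

/-- One-step feasible set `Υ(S) = {x | ∃ u ∈ 𝒰, f(x,u) ∈ S}`. -/
def oneStep {X U : Type} (f : X → U → X) (S : Set X) : Set X :=
  {x | ∃ u : U, f x u ∈ S}

/-- The `I`-determined feasible set `X_k^I`: states `xk` from which some control makes the
signal, consisting of some prefix consistent with `I` followed by `xk` and the resulting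
trajectory, satisfy `Φ`. -/
noncomputable def feasSet {X U : Type} (Φ : Frag X) (f : X → U → X) (k : ℕ)
    (I : Frag.BasicSet Φ) : Set X :=
  {xk | ∃ xpre : ℕ → X, Frag.basicOf Φ xpre k = I ∧
          ∃ u : ℕ → U, Frag.fsat Φ (runFrom f k xpre xk u) 0}

end STLMon

open STLMon STLMon.Frag

namespace STLMon
namespace Frag
variable {X : Type}

lemma subAt_append (Φ : Frag X) (p : List Dir) (φ : Frag X)
    (h : subAt Φ p = some φ) (q : List Dir) : subAt Φ (p ++ q) = subAt φ q := by
  induction p generalizing Φ with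
  | nil => simp [subAt] at h; subst h; rfl
  | cons d p ih =>
    cases Φ <;> cases d <;> simp [subAt] at h ⊢ <;> exact ih _ h

lemma intOf_append (Φ : Frag X) (p : List Dir) (φ : Frag X)
    (h : subAt Φ p = some φ) (q : List Dir) :
    intOf Φ (p ++ q) = intOf Φ p + intOf φ q := by
  induction p generalizing Φ with
  | nil => simp [subAt] at h; subst h; simp [intOf]
  | cons d p ih =>
    cases Φ <;> cases d <;> simp [subAt, intOf] at h ⊢ <;> rw [ih _ h] <;> omega

lemma endOf_append (Φ : Frag X) (p : List Dir) (φ : Frag X)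
    (h : subAt Φ p = some φ) (q : List Dir) :
    endOf Φ (p ++ q) = endOf Φ p + endOf φ q := by
  induction p generalizing Φ with
  | nil => simp [subAt] at h; subst h; simp [endOf]
  | cons d p ih =>
    cases Φ <;> cases d <;> simp [subAt, endOf] at h ⊢ <;> rw [ih _ h] <;> omega

open Classical in
lemma basicOf_val (Φ : Frag X) (x : ℕ → X) (k : ℕ) (p : List Dir) (t : ℕ)
    (h : Relevant Φ p t) (htk : t < k) :
    basicOf Φ x k p t h = if x t ∈ regionAt Φ p then SatVal.one else SatVal.zero := by
  induction k with
  | zero => omega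
  | succ k ih =>
    by_cases htk' : t = k
    · simp [basicOf, updateB, htk']
    · simp [basicOf, updateB, htk', ih (by omega)]

end Frag
end STLMon

namespace STLMon
namespace Frag
variable {X : Type}

open Classical in
lemma ind_eq (Φ : Frag X) (x : ℕ → X) (k : ℕ)
    (hk : ∀ p, IsHNode Φ p → endOf Φ p < k) :
    ∀ (φ : Frag X) (p : List Dir), subAt Φ p = some φ →
      ∀ t, intOf Φ p ≤ t → t ≤ endOf Φ p →
      ind (val Φ (basicOf Φ x k)) φ p t =
        if fsat φ x t then SatVal.one else SatVal.zero := by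
  intro φ
  induction φ with
  | reg H =>
    intro p hφ t ht1 ht2
    have hH : IsHNode Φ p := ⟨H, hφ⟩
    have hrel : Relevant Φ p t := ⟨hH, ht1, ht2⟩
    have htk : t < k := lt_of_le_of_lt ht2 (hk p hH)
    have hreg : regionAt Φ p = H := by simp [regionAt, hφ]
    show val Φ (basicOf Φ x k) p t = _
    rw [val, dif_pos hrel, basicOf_val Φ x k p t hrel htk, hreg]
    rfl
  | conj φ ψ ihφ ihψ =>
    intro p hφ t ht1 ht2
    have hsl := subAt_append Φ p _ hφ [Dir.left]
    have hsr := subAt_append Φ p _ hφ [Dir.right]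
    simp [subAt] at hsl hsr
    have hil := intOf_append Φ p _ hφ [Dir.left]
    have hir := intOf_append Φ p _ hφ [Dir.right]
    have hel := endOf_append Φ p _ hφ [Dir.left]
    have her := endOf_append Φ p _ hφ [Dir.right]
    simp [intOf, endOf] at hil hir hel her
    have hl := ihφ _ hsl t (by omega) (by omega)
    have hr := ihψ _ hsr t (by omega) (by omega)
    rw [ind, hl, hr]
    by_cases h1 : fsat φ x t <;> by_cases h2 : fsat ψ x t <;>
      simp [h1, h2, fsat]
  | glob a b φ ihφ =>
    intro p hφ t ht1 ht2
    have hsl := subAt_append Φ p _ hφ [Dir.left]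
    simp [subAt] at hsl
    have hil := intOf_append Φ p _ hφ [Dir.left]
    have hel := endOf_append Φ p _ hφ [Dir.left]
    simp [intOf, endOf] at hil hel
    have hch : ∀ t', a ≤ t' → t' ≤ b →
        ind (val Φ (basicOf Φ x k)) φ (p ++ [Dir.left]) (t + t') =
          if fsat φ x (t + t') then SatVal.one else SatVal.zero := by
      intro t' h1 h2
      exact ihφ _ hsl (t + t') (by omega) (by omega)
    by_cases hf : fsat (glob a b φ) x t
    · have hC0 : ¬ ∃ t', a ≤ t' ∧ t' ≤ b ∧
          ind (val Φ (basicOf Φ x k)) φ (p ++ [Dir.left]) (t + t') = SatVal.zero := by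
        rintro ⟨t', h1, h2, h3⟩
        rw [hch t' h1 h2, if_pos (hf (t + t') (by omega) (by omega))] at h3
        exact SatVal.noConfusion h3
      have hC1 : ∀ t', a ≤ t' → t' ≤ b →
          ind (val Φ (basicOf Φ x k)) φ (p ++ [Dir.left]) (t + t') = SatVal.one := by
        intro t' h1 h2
        rw [hch t' h1 h2, if_pos (hf (t + t') (by omega) (by omega))]
      rw [ind, if_neg hC0, if_pos hC1, if_pos hf]
    · have := hf
      simp only [fsat, not_forall] at this
      obtain ⟨k', h1, h2, h3⟩ := this
      have hC0 : ∃ t', a ≤ t' ∧ t' ≤ b ∧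
          ind (val Φ (basicOf Φ x k)) φ (p ++ [Dir.left]) (t + t') = SatVal.zero := by
        refine ⟨k' - t, by omega, by omega, ?_⟩
        have he : t + (k' - t) = k' := by omega
        rw [hch (k' - t) (by omega) (by omega), he, if_neg h3]
      rw [ind, if_pos hC0, if_neg hf]
  | untl a b φ ψ ihφ ihψ =>
    intro p hφ t ht1 ht2
    have hsl := subAt_append Φ p _ hφ [Dir.left]
    have hsr := subAt_append Φ p _ hφ [Dir.right]
    simp [subAt] at hsl hsr
    have hil := intOf_append Φ p _ hφ [Dir.left]
    have hir := intOf_append Φ p _ hφ [Dir.right]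
    have hel := endOf_append Φ p _ hφ [Dir.left]
    have her := endOf_append Φ p _ hφ [Dir.right]
    simp [intOf, endOf] at hil hir hel her
    have hchl : ∀ t', a ≤ t' → t' ≤ b →
        ind (val Φ (basicOf Φ x k)) φ (p ++ [Dir.left]) (t + t') =
          if fsat φ x (t + t') then SatVal.one else SatVal.zero := by
      intro t' h1 h2; exact ihφ _ hsl (t + t') (by omega) (by omega)
    have hchr : ∀ t', a ≤ t' → t' ≤ b →
        ind (val Φ (basicOf Φ x k)) ψ (p ++ [Dir.right]) (t + t') =
          if fsat ψ x (t + t') then SatVal.one else SatVal.zero := by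
      intro t' h1 h2; exact ihψ _ hsr (t + t') (by omega) (by omega)
    by_cases hf : fsat (untl a b φ ψ) x t
    · obtain ⟨k', h1, h2, h3, h4⟩ := hf
      have hfpos : fsat (untl a b φ ψ) x t := ⟨k', h1, h2, h3, h4⟩
      have hronek : ind (val Φ (basicOf Φ x k)) ψ (p ++ [Dir.right]) (t + (k' - t)) =
          SatVal.one := by
        have he : t + (k' - t) = k' := by omega
        rw [hchr (k' - t) (by omega) (by omega), he, if_pos h3]
      have hC0 : ¬ ((∀ t', a ≤ t' → t' ≤ b →
            ind (val Φ (basicOf Φ x k)) ψ (p ++ [Dir.right]) (t + t') = SatVal.zero) ∨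
          (∀ t', a ≤ t' → t' ≤ b →
            ind (val Φ (basicOf Φ x k)) ψ (p ++ [Dir.right]) (t + t') = SatVal.one →
            ∃ t'', a ≤ t'' ∧ t'' ≤ t' ∧
              ind (val Φ (basicOf Φ x k)) φ (p ++ [Dir.left]) (t + t'') = SatVal.zero)) := by
        rintro (hA | hB)
        · have := hA (k' - t) (by omega) (by omega)
          rw [hronek] at this; exact SatVal.noConfusion this
        · obtain ⟨t'', hb1, hb2, hb3⟩ := hB (k' - t) (by omega) (by omega) hronek
          rw [hchl t'' hb1 (by omega), if_pos (h4 (t + t'') (by omega) (by omega))] at hb3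
          exact SatVal.noConfusion hb3
      have hC1 : ∃ t', a ≤ t' ∧ t' ≤ b ∧
          ind (val Φ (basicOf Φ x k)) ψ (p ++ [Dir.right]) (t + t') = SatVal.one ∧
          ∀ t'', a ≤ t'' → t'' ≤ t' →
            ind (val Φ (basicOf Φ x k)) φ (p ++ [Dir.left]) (t + t'') = SatVal.one := by
        refine ⟨k' - t, by omega, by omega, hronek, ?_⟩
        intro t'' hb1 hb2
        rw [hchl t'' hb1 (by omega), if_pos (h4 (t + t'') (by omega) (by omega))]
      rw [ind, if_neg hC0, if_pos hC1, if_pos hfpos]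
    · have hC0 : (∀ t', a ≤ t' → t' ≤ b →
            ind (val Φ (basicOf Φ x k)) ψ (p ++ [Dir.right]) (t + t') = SatVal.zero) ∨
          (∀ t', a ≤ t' → t' ≤ b →
            ind (val Φ (basicOf Φ x k)) ψ (p ++ [Dir.right]) (t + t') = SatVal.one →
            ∃ t'', a ≤ t'' ∧ t'' ≤ t' ∧
              ind (val Φ (basicOf Φ x k)) φ (p ++ [Dir.left]) (t + t'') = SatVal.zero) := by
        right
        intro t' h1 h2 hone
        rw [hchr t' h1 h2] at hone
        have hψs : fsat ψ x (t + t') := by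
          by_contra hc; rw [if_neg hc] at hone; exact SatVal.noConfusion hone
        have hnφ : ∃ k'', t + a ≤ k'' ∧ k'' ≤ t + t' ∧ ¬ fsat φ x k'' := by
          by_contra hc
          push_neg at hc
          exact hf ⟨t + t', by omega, by omega, hψs, fun k'' hb1 hb2 => hc k'' hb1 hb2⟩
        obtain ⟨k'', hb1, hb2, hb3⟩ := hnφ
        refine ⟨k'' - t, by omega, by omega, ?_⟩
        have he : t + (k'' - t) = k'' := by omega
        rw [hchl (k'' - t) (by omega) (by omega), he, if_neg hb3]
      rw [ind, if_pos hC0, if_neg hf]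

end Frag
end STLMon



/-- (Dual of Proposition 3) If `k > N`, where `N` is the largest right endpoint
`end^{v_i}` over all `ℋ`-nodes, then for any node `v` (path `p`, subformula `φ = Φ^v`)
and any `t ∈ [int^v, end^v]`, the induced entry computed from `I(x_{0:k-1})` satisfies
`ι^v_{I(x_{0:k-1})}[t] = 0` iff `(x, t) ⊭ Φ^v`. -/
theorem induced_zero_iff_not_sat {X : Type} (Φ : Frag X) (x : ℕ → X) (k : ℕ)
    (hk : ∀ p, IsHNode Φ p → endOf Φ p < k)
    (p : List Dir) (φ : Frag X) (hφ : subAt Φ p = some φ)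
    (t : ℕ) (ht1 : intOf Φ p ≤ t) (ht2 : t ≤ endOf Φ p) :
    ind (val Φ (basicOf Φ x k)) φ p t = SatVal.zero ↔ ¬ fsat φ x t := by
  rw [ind_eq Φ x k hk φ p hφ t ht1 ht2]
  by_cases hf : fsat φ x t <;> simp [hf]
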